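/- arXiv:1903.02385 — 4 statements merged into one kernel-verified Lean document; each statement's English description precedes it below -/
import Mathlib

section
/- There is a unique a₀ > 0 such that g(a₀) = B·a₀. Moreover, if v : ℝ → ℝ is a C⁴ positive solution of the ODE v''''(t) − A·v''(t) + B·v(t) = g(v(t)) on ℝ, then inf_{t ∈ ℝ} v(t) ≤ a₀, and inf_{t ∈ ℝ} v(t) = a₀ if and only if v is the constant function a₀. -/
open Real Filter Set Topology

/-!
Since `g t / t < g' t`, the ratio `g t / t` is strictly increasing on `(0, ∞)`; it drops below `B`
near `0` (where `g' → β < B`) and exceeds it for large `t` (where `g t ≥ c t ^ q`). So `g a = B a`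
has exactly one positive root `a₀`, and `B s ≤ g s` for all `s ≥ a₀`.

If a positive solution satisfies `v ≥ a₀`, then `v'''' ≥ A v''`. Were `v'' (t₀) > 0`, a Gronwall
argument applied forward or backward in time (according to the sign of `v''' (t₀)`) would keep `v''`
above a positive constant, so `v → ∞` and `v'''' ≳ v ^ q`; three energy identities then give
`v' ≳ v ^ ((q + 3) / 4)`, which blows up in finite time. Hence `v'' ≤ 0`, and a concave function
bounded below on `ℝ` is constant, hence a positive root of `g a = B a`, i.e. `a₀`.
-/

/-- Conditions (G) on the nonlinearity `g`, extended to `[0,∞)` by `g 0 = 0`. -/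
def CondG (n : ℕ) (g : ℝ → ℝ) : Prop :=
  ContDiffOn ℝ 1 g (Set.Ioi 0) ∧
  (∀ t > 0, 0 < g t) ∧
  Filter.Tendsto g (nhdsWithin 0 (Set.Ioi 0)) (nhds 0) ∧
  (∀ t > 0, g t / t < deriv g t ∧ deriv g t ≤ (((n : ℝ) + 4) / ((n : ℝ) - 4)) * (g t / t)) ∧
  (∃ β : ℝ, 0 ≤ β ∧ β < (n : ℝ) ^ 2 * ((n : ℝ) - 4) ^ 2 / 16 ∧
    Filter.Tendsto (deriv g) (nhdsWithin 0 (Set.Ioi 0)) (nhds β)) ∧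
  (∃ q c : ℝ, 1 < q ∧ 0 < c ∧ ∀ t ≥ 1, c * t ^ q ≤ g t) ∧
  g 0 = 0

/-- `v` solves the ODE `v'''' - A v'' + B v = g(v)` on all of `ℝ`. -/
def IsSol (A B : ℝ) (g v : ℝ → ℝ) : Prop :=
  ∀ t : ℝ, iteratedDeriv 4 v t - A * iteratedDeriv 2 v t + B * v t = g (v t)

theorem add_mul_sub_le_of_le_hasDerivAt {f f' : ℝ → ℝ} (hf : ∀ t, HasDerivAt f (f' t) t)
    {T K : ℝ} (h : ∀ t ≥ T, K ≤ f' t) {t : ℝ} (ht : T ≤ t) : f T + K * (t - T) ≤ f t := by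
  have hcont : Continuous f := continuous_iff_continuousAt.2 fun x => (hf x).continuousAt
  have := (convex_Ici T).mul_sub_le_image_sub_of_le_deriv hcont.continuousOn
    (fun x _ => (hf x).differentiableAt.differentiableWithinAt)
    (fun x hx => (hf x).deriv ▸ h x (interior_subset hx)) T self_mem_Ici t ht ht
  linarith

theorem tendsto_atTop_of_eventually_le_hasDerivAt {f f' : ℝ → ℝ}
    (hf : ∀ t, HasDerivAt f (f' t) t) {K : ℝ} (hK : 0 < K) (h : ∀ᶠ t in atTop, K ≤ f' t) :
    Tendsto f atTop atTop := by
  obtain ⟨T, hT⟩ := eventually_atTop.1 h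
  refine tendsto_atTop_mono' _ ((eventually_ge_atTop T).mono fun t ht =>
    add_mul_sub_le_of_le_hasDerivAt hf hT ht) ?_
  exact tendsto_atTop_add_const_left _ _
    ((tendsto_atTop_add_const_right _ _ tendsto_id).const_mul_atTop hK)

theorem exp_mul_le_of_mul_le_hasDerivAt {y y' : ℝ → ℝ} (hy : ∀ t, HasDerivAt y (y' t) t)
    {a t₀ : ℝ} (h : ∀ t ≥ t₀, a * y t ≤ y' t) {t : ℝ} (ht : t₀ ≤ t) :
    exp (a * (t - t₀)) * y t₀ ≤ y t := by
  have hz : ∀ s, HasDerivAt (fun s => exp (-(a * s)) * y s) (exp (-(a * s)) * (y' s - a * y s)) s :=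
    fun s => ((((hasDerivAt_id s).const_mul a).neg.exp).mul (hy s)).congr_deriv (by simp; ring)
  have hmono := add_mul_sub_le_of_le_hasDerivAt hz
    (fun s hs => mul_nonneg (exp_pos _).le (sub_nonneg.2 (h s hs))) ht
  have key : exp (a * t) * (exp (-(a * t₀)) * y t₀) ≤ exp (a * t) * (exp (-(a * t)) * y t) :=
    mul_le_mul_of_nonneg_left (by linarith) (exp_pos _).le
  rwa [← mul_assoc, ← mul_assoc, ← exp_add, ← exp_add, add_neg_cancel, exp_zero, one_mul,
    ← sub_eq_add_neg, ← mul_sub] at key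

theorem exists_eventually_le_of_hasDerivAt_nonneg {f f' : ℝ → ℝ}
    (hf : ∀ t, HasDerivAt f (f' t) t) (h : ∀ᶠ t in atTop, 0 ≤ f' t) :
    ∃ C, ∀ᶠ t in atTop, C ≤ f t := by
  obtain ⟨T, hT⟩ := eventually_atTop.1 h
  exact ⟨f T, (eventually_ge_atTop T).mono fun t ht => by
    simpa using add_mul_sub_le_of_le_hasDerivAt hf hT ht⟩

theorem eventually_half_mul_rpow_le_of_hasDerivAt_nonneg {v X E' : ℝ → ℝ} {k s : ℝ}
    (hv : Tendsto v atTop atTop) (hk : 0 < k) (hs : 0 < s)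
    (hE : ∀ t, HasDerivAt (fun t => X t - k * v t ^ s) (E' t) t) (hE' : ∀ᶠ t in atTop, 0 ≤ E' t) :
    ∀ᶠ t in atTop, k / 2 * v t ^ s ≤ X t := by
  obtain ⟨C, hC⟩ := exists_eventually_le_of_hasDerivAt_nonneg hE hE'
  have hbig :=
    (((tendsto_rpow_atTop hs).comp hv).const_mul_atTop (half_pos hk)).eventually_ge_atTop (-C)
  filter_upwards [hC, hbig] with t hCt hbigt
  simp only [Function.comp] at hbigt
  linarith

theorem eventually_mul_lt_mul_rpow {c q : ℝ} (hc : 0 < c) (hq : 1 < q) (B : ℝ) :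
    ∀ᶠ x in atTop, B * x < c * x ^ q := by
  have hpow := ((tendsto_rpow_atTop (sub_pos.2 hq)).const_mul_atTop hc).eventually_gt_atTop B
  filter_upwards [hpow, eventually_gt_atTop 0] with x hx hx0
  rw [rpow_sub_one hx0.ne', mul_div_assoc', lt_div_iff₀ hx0] at hx
  exact hx

theorem not_eventually_mul_rpow_le_deriv {v v₁ : ℝ → ℝ} (hv : ∀ t, HasDerivAt v (v₁ t) t)
    (hpos : ∀ t, 0 < v t) {k s : ℝ} (hk : 0 < k) (hs : 1 < s) :
    ¬ ∀ᶠ t in atTop, k * v t ^ s ≤ v₁ t := by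
  intro h
  -- `-v ^ (1 - s)` is negative, yet its derivative is bounded below by `(s - 1) k > 0`.
  have hN : ∀ t, HasDerivAt (fun t => -v t ^ (1 - s)) (-(v₁ t * (1 - s) * v t ^ (1 - s - 1))) t :=
    fun t => ((hv t).rpow_const (Or.inl (hpos t).ne')).neg
  have hN' : ∀ᶠ t in atTop, (s - 1) * k ≤ -(v₁ t * (1 - s) * v t ^ (1 - s - 1)) := by
    filter_upwards [h] with t ht
    have hvs : v t ^ s * v t ^ (1 - s - 1) = 1 := by
      rw [← rpow_add (hpos t)]; norm_num
    have hk' : k ≤ v₁ t * v t ^ (1 - s - 1) := by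
      calc k = k * v t ^ s * v t ^ (1 - s - 1) := by rw [mul_assoc, hvs, mul_one]
        _ ≤ _ := mul_le_mul_of_nonneg_right ht (rpow_pos_of_pos (hpos t) _).le
    nlinarith
  obtain ⟨t, ht⟩ := ((tendsto_atTop_of_eventually_le_hasDerivAt hN
    (mul_pos (sub_pos.2 hs) hk) hN').eventually_gt_atTop 0).exists
  linarith [rpow_pos_of_pos (hpos t) (1 - s)]

theorem eventually_mul_rpow_le_deriv {v v₁ v₂ v₃ v₄ : ℝ → ℝ}
    (hv₀ : ∀ t, HasDerivAt v (v₁ t) t) (hv₁ : ∀ t, HasDerivAt v₁ (v₂ t) t)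
    (hv₂ : ∀ t, HasDerivAt v₂ (v₃ t) t) (hv₃ : ∀ t, HasDerivAt v₃ (v₄ t) t)
    (hpos : ∀ t, 0 < v t) (hv : Tendsto v atTop atTop) (hv₁_nonneg : ∀ᶠ t in atTop, 0 ≤ v₁ t)
    {c q : ℝ} (hc : 0 < c) (hq : 1 < q) (h₄ : ∀ᶠ t in atTop, c * v t ^ q ≤ v₄ t) :
    ∃ k > 0, ∀ᶠ t in atTop, k * v t ^ ((q + 3) / 4) ≤ v₁ t := by
  have hpow : ∀ s t, HasDerivAt (fun t => v t ^ s) (v₁ t * s * v t ^ (s - 1)) t := fun s t =>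
    (hv₀ t).rpow_const (Or.inl (hpos t).ne')
  -- Three energy identities, each trading one derivative of `v` for a power of `v`.
  have hE₁ := eventually_half_mul_rpow_le_of_hasDerivAt_nonneg
    (X := fun t => v₃ t * v₁ t - 1 / 2 * v₂ t ^ 2) (k := c / (q + 1)) (s := q + 1) hv
    (by positivity) (by linarith)
    (fun t => ((((hv₃ t).mul (hv₁ t)).sub (((hv₂ t).pow 2).const_mul _)).sub
      ((hpow _ t).const_mul _)).congr_deriv rfl) (by
      filter_upwards [hv₁_nonneg, h₄] with t h₁ h₄
      refine (mul_nonneg (sub_nonneg.2 h₄) h₁).trans_eq ?_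
      rw [add_sub_cancel_right]
      field_simp
      ring)
  have hk₁ : 0 < c / (q + 1) / 2 := by positivity
  set k₁ := c / (q + 1) / 2
  have hE₂ := eventually_half_mul_rpow_le_of_hasDerivAt_nonneg
    (X := fun t => v₁ t ^ 2 * v₂ t) (k := k₁ / (q + 2)) (s := q + 2) hv
    (by positivity) (by linarith)
    (fun t => ((((hv₁ t).pow 2).mul (hv₂ t)).sub ((hpow _ t).const_mul _)).congr_deriv rfl) (by
      filter_upwards [hv₁_nonneg, hE₁] with t h₁ hE₁
      have : 0 ≤ v₃ t * v₁ t - k₁ * v t ^ (q + 1) := by nlinarith [sq_nonneg (v₂ t)]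
      refine (add_nonneg (by positivity : 0 ≤ 2 * v₁ t * v₂ t ^ 2)
        (mul_nonneg h₁ this)).trans_eq ?_
      rw [show q + 2 - 1 = q + 1 by ring, Pi.pow_apply]
      field_simp
      ring)
  have hk₂ : 0 < k₁ / (q + 2) / 2 := by positivity
  set k₂ := k₁ / (q + 2) / 2
  have hE₃ := eventually_half_mul_rpow_le_of_hasDerivAt_nonneg
    (X := fun t => v₁ t ^ 4) (k := 4 * k₂ / (q + 3)) (s := q + 3) hv
    (by positivity) (by linarith)
    (fun t => (((hv₁ t).pow 4).sub ((hpow _ t).const_mul _)).congr_deriv rfl) (by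
      filter_upwards [hv₁_nonneg, hE₂] with t h₁ hE₂
      refine (mul_nonneg (mul_nonneg zero_le_four h₁) (sub_nonneg.2 hE₂)).trans_eq ?_
      rw [show q + 3 - 1 = q + 2 by ring]
      field_simp
      ring)
  have hk₃ : 0 < 4 * k₂ / (q + 3) / 2 := by positivity
  set k₃ := 4 * k₂ / (q + 3) / 2
  refine ⟨k₃ ^ (4⁻¹ : ℝ), by positivity, ?_⟩
  filter_upwards [hv₁_nonneg, hE₃] with t h₁ hE₃
  calc k₃ ^ (4⁻¹ : ℝ) * v t ^ ((q + 3) / 4) = (k₃ * v t ^ (q + 3)) ^ (4⁻¹ : ℝ) := by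
        rw [mul_rpow hk₃.le (rpow_pos_of_pos (hpos t) _).le, ← rpow_mul (hpos t).le,
          div_eq_mul_inv]
    _ ≤ (v₁ t ^ 4) ^ (4⁻¹ : ℝ) :=
        rpow_le_rpow (mul_pos hk₃ (rpow_pos_of_pos (hpos t) _)).le hE₃ (by norm_num)
    _ = v₁ t := by exact_mod_cast pow_rpow_inv_natCast h₁ four_ne_zero

theorem exists_pos_le_of_sq_mul_le_hasDerivAt {p p₁ p₂ : ℝ → ℝ}
    (hp : ∀ t, HasDerivAt p (p₁ t) t) (hp₁ : ∀ t, HasDerivAt p₁ (p₂ t) t) {α t₀ : ℝ}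
    (hα : 0 < α) (h : ∀ t ≥ t₀, α ^ 2 * p t ≤ p₂ t) (hp₀ : 0 < p t₀)
    (hu₀ : 0 < p₁ t₀ + α * p t₀) : ∃ κ > 0, ∀ t ≥ t₀, κ ≤ p t := by
  -- `p₁ + α p` grows like `exp (α t)`; then `p` stays above `min (p t₀) ((p₁ + α p) t₀ / α)`.
  have hu : ∀ t ≥ t₀, p₁ t₀ + α * p t₀ ≤ p₁ t + α * p t := fun t ht =>
    (le_mul_of_one_le_left hu₀.le (one_le_exp (by nlinarith))).trans
      (exp_mul_le_of_mul_le_hasDerivAt (y := fun s => p₁ s + α * p s) (a := α)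
        (fun s => (hp₁ s).add ((hp s).const_mul α))
        (fun s hs => by nlinarith [h s hs]) ht)
  have hm : 0 < min (p t₀) ((p₁ t₀ + α * p t₀) / α) := lt_min hp₀ (div_pos hu₀ hα)
  set m := min (p t₀) ((p₁ t₀ + α * p t₀) / α)
  refine ⟨m, hm, fun t ht => ?_⟩
  have hαm : α * m ≤ p₁ t₀ + α * p t₀ := (le_div_iff₀' hα).1 (min_le_right _ _)
  have := exp_mul_le_of_mul_le_hasDerivAt (fun s => (hp s).sub_const m) (a := -α)
    (fun s hs => by nlinarith [hu s hs]) ht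
  linarith [mul_nonneg (exp_pos (-α * (t - t₀))).le (sub_nonneg.2 (min_le_left _ _ : m ≤ p t₀))]

theorem eq_of_hasDerivAt_nonpos_of_bddBelow {v v₁ v₂ : ℝ → ℝ}
    (hv : ∀ t, HasDerivAt v (v₁ t) t) (hv₁ : ∀ t, HasDerivAt v₁ (v₂ t) t) (h₂ : ∀ t, v₂ t ≤ 0)
    (hb : BddBelow (range v)) (s t : ℝ) : v s = v t := by
  obtain ⟨m, hm⟩ := hb
  have hanti : Antitone v₁ := antitone_of_hasDerivAt_nonpos hv₁ h₂
  have hzero : ∀ τ, v₁ τ = 0 := by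
    intro τ
    rcases lt_trichotomy (v₁ τ) 0 with hneg | hzero | hpos
    · obtain ⟨t, ht⟩ := ((tendsto_atTop_of_eventually_le_hasDerivAt (f := fun t => -v t)
        (fun t => (hv t).neg) (neg_pos.2 hneg) ((eventually_ge_atTop τ).mono fun t ht =>
          neg_le_neg (hanti ht))).eventually_gt_atTop (-m)).exists
      linarith [hm (mem_range_self t)]
    · exact hzero
    · have hw : ∀ t, HasDerivAt (fun t => -v (-t)) (v₁ (-t)) t := fun t =>
        ((hv (-t)).comp t (hasDerivAt_neg t)).neg.congr_deriv (by ring)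
      obtain ⟨t, ht⟩ := ((tendsto_atTop_of_eventually_le_hasDerivAt hw hpos
        ((eventually_ge_atTop (-τ)).mono fun t ht =>
          hanti (neg_le.1 ht))).eventually_gt_atTop (-m)).exists
      linarith [hm (mem_range_self (-t))]
  exact is_const_of_deriv_eq_zero (fun t => (hv t).differentiableAt)
    (fun t => (hv t).deriv.trans (hzero t)) s t

theorem strictMonoOn_div_self {g : ℝ → ℝ} (hg : DifferentiableOn ℝ g (Ioi 0))
    (hder : ∀ t > 0, g t / t < deriv g t) : StrictMonoOn (fun t => g t / t) (Ioi 0) := by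
  refine strictMonoOn_of_deriv_pos (convex_Ioi 0)
    (hg.continuousOn.div continuousOn_id fun t ht => (mem_Ioi.1 ht).ne') fun t ht => ?_
  rw [interior_Ioi] at ht
  have ht₀ : 0 < t := ht
  have hd : HasDerivAt (fun t => g t / t) ((deriv g t * t - g t * 1) / t ^ 2) t :=
    (hg.differentiableAt (Ioi_mem_nhds ht₀)).hasDerivAt.div (hasDerivAt_id t) ht₀.ne'
  have := (div_lt_iff₀ ht₀).1 (hder t ht₀)
  rw [hd.deriv]
  exact div_pos (by linarith) (by positivity)

theorem exists_div_self_lt {g : ℝ → ℝ} {β B : ℝ} (hder : ∀ t > 0, g t / t < deriv g t)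
    (hβ : Tendsto (deriv g) (𝓝[>] 0) (𝓝 β)) (hβB : β < B) : ∃ t > 0, g t / t < B := by
  obtain ⟨t, ht, ht₀⟩ := ((hβ.eventually_lt_const hβB).and self_mem_nhdsWithin).exists
  exact ⟨t, ht₀, (hder t ht₀).trans ht⟩

theorem exists_lt_div_self {g : ℝ → ℝ} {c q : ℝ} (hc : 0 < c) (hq : 1 < q)
    (hgrow : ∀ t ≥ 1, c * t ^ q ≤ g t) (B : ℝ) : ∃ t > 0, B < g t / t := by
  obtain ⟨t, ht, ht₁⟩ := ((eventually_mul_lt_mul_rpow hc hq B).and (eventually_ge_atTop 1)).exists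
  exact ⟨t, by linarith, (lt_div_iff₀ (by linarith)).2 (ht.trans_le (hgrow t ht₁))⟩

theorem existsUnique_pos_eq_mul {g : ℝ → ℝ} {B : ℝ}
    (hmono : StrictMonoOn (fun t => g t / t) (Ioi 0)) (hg : ContinuousOn g (Ioi 0))
    (h₁ : ∃ t > 0, g t / t < B) (h₂ : ∃ t > 0, B < g t / t) : ∃! a, 0 < a ∧ g a = B * a := by
  obtain ⟨t₁, ht₁, hB₁⟩ := h₁
  obtain ⟨t₂, ht₂, hB₂⟩ := h₂
  obtain ⟨a, ha, hφa⟩ := isPreconnected_Ioi.intermediate_value (mem_Ioi.2 ht₁) (mem_Ioi.2 ht₂)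
    (f := fun t => g t / t) (hg.div continuousOn_id fun t ht => (mem_Ioi.1 ht).ne')
    ⟨hB₁.le, hB₂.le⟩
  have ha₀ : 0 < a := ha
  change g a / a = B at hφa
  refine ⟨a, ⟨ha₀, (div_eq_iff ha₀.ne').1 hφa⟩, fun b ⟨hb₀, hb⟩ => hmono.injOn hb₀ ha ?_⟩
  rw [hφa, hb, mul_div_cancel_right₀ _ hb₀.ne']

theorem mul_lt_of_eq_mul_of_lt {g : ℝ → ℝ} {B a s : ℝ}
    (hmono : StrictMonoOn (fun t => g t / t) (Ioi 0)) (ha : 0 < a) (hroot : g a = B * a)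
    (has : a < s) : B * s < g s := by
  have := hmono ha (mem_Ioi.2 (ha.trans has)) has
  simp only [hroot, mul_div_cancel_right₀ _ ha.ne'] at this
  exact (lt_div_iff₀ (ha.trans has)).1 this

theorem mul_le_of_eq_mul_of_le {g : ℝ → ℝ} {B a s : ℝ}
    (hmono : StrictMonoOn (fun t => g t / t) (Ioi 0)) (ha : 0 < a) (hroot : g a = B * a)
    (has : a ≤ s) : B * s ≤ g s := by
  rcases has.eq_or_lt with rfl | has
  · exact hroot.ge
  · exact (mul_lt_of_eq_mul_of_lt hmono ha hroot has).le

theorem ContDiff.hasDerivAt_iteratedDeriv {f : ℝ → ℝ} {n k : ℕ} (hf : ContDiff ℝ n f)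
    (hk : k < n) (t : ℝ) : HasDerivAt (iteratedDeriv k f) (iteratedDeriv (k + 1) f t) t := by
  rw [iteratedDeriv_succ]
  exact (hf.differentiable_iteratedDeriv k (by exact_mod_cast hk) t).hasDerivAt

theorem ContDiff.hasDerivAt_iteratedDeriv_one {f : ℝ → ℝ} {n : ℕ} (hf : ContDiff ℝ n f)
    (hn : 0 < n) (t : ℝ) : HasDerivAt f (iteratedDeriv 1 f t) t := by
  simpa only [iteratedDeriv_zero] using hf.hasDerivAt_iteratedDeriv hn t

theorem isSol_const_iff {A B a : ℝ} {g : ℝ → ℝ} : IsSol A B g (fun _ => a) ↔ B * a = g a := by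
  simp [IsSol, iteratedDeriv_const]

theorem IsSol.comp_neg {A B : ℝ} {g v : ℝ → ℝ} (h : IsSol A B g v) :
    IsSol A B g (fun t => v (-t)) := fun t => by
  norm_num [iteratedDeriv_comp_neg]
  exact h (-t)

theorem IsSol.iteratedDeriv_three_add_nonpos {A B c q : ℝ} {g v : ℝ → ℝ} (hsol : IsSol A B g v)
    (hv : ContDiff ℝ 4 v) (hpos : ∀ t, 0 < v t) (hA : 0 < A) (hc : 0 < c) (hq : 1 < q)
    (hgrow : ∀ t ≥ 1, c * t ^ q ≤ g t) (hBg : ∀ t, B * v t ≤ g (v t)) {t₀ : ℝ}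
    (h₂ : 0 < iteratedDeriv 2 v t₀) : iteratedDeriv 3 v t₀ + √A * iteratedDeriv 2 v t₀ ≤ 0 := by
  by_contra! h₃
  have hD : ∀ k < 4, ∀ t, HasDerivAt (iteratedDeriv k v) (iteratedDeriv (k + 1) v t) t :=
    fun k hk => hv.hasDerivAt_iteratedDeriv hk
  have hD₀ := hv.hasDerivAt_iteratedDeriv_one (by norm_num)
  obtain ⟨κ, hκ, hκ₂⟩ := exists_pos_le_of_sq_mul_le_hasDerivAt (hD 2 (by norm_num))
    (hD 3 (by norm_num)) (sqrt_pos.2 hA)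
    (fun t _ => by rw [sq_sqrt hA.le]; linarith [hsol t, hBg t]) h₂ h₃
  have hv₁ : Tendsto (iteratedDeriv 1 v) atTop atTop :=
    tendsto_atTop_of_eventually_le_hasDerivAt (hD 1 (by norm_num)) hκ (eventually_atTop.2 ⟨t₀, hκ₂⟩)
  have hv_top : Tendsto v atTop atTop :=
    tendsto_atTop_of_eventually_le_hasDerivAt hD₀ one_pos (hv₁.eventually_ge_atTop 1)
  have h₄ : ∀ᶠ t in atTop, c / 2 * v t ^ q ≤ iteratedDeriv 4 v t := by
    filter_upwards [hv_top.eventually (eventually_mul_lt_mul_rpow (half_pos hc) hq B),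
      hv_top.eventually_ge_atTop 1, eventually_ge_atTop t₀] with t hBt hvt ht
    nlinarith [hsol t, hgrow (v t) hvt, hκ₂ t ht]
  obtain ⟨k, hk, hk₁⟩ := eventually_mul_rpow_le_deriv hD₀ (hD 1 (by norm_num))
    (hD 2 (by norm_num)) (hD 3 (by norm_num)) hpos hv_top (hv₁.eventually_ge_atTop 0)
    (half_pos hc) hq h₄
  exact not_eventually_mul_rpow_le_deriv hD₀ hpos hk (by linarith) hk₁

theorem IsSol.iteratedDeriv_two_nonpos {A B c q : ℝ} {g v : ℝ → ℝ} (hsol : IsSol A B g v)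
    (hv : ContDiff ℝ 4 v) (hpos : ∀ t, 0 < v t) (hA : 0 < A) (hc : 0 < c) (hq : 1 < q)
    (hgrow : ∀ t ≥ 1, c * t ^ q ≤ g t) (hBg : ∀ t, B * v t ≤ g (v t)) (t : ℝ) :
    iteratedDeriv 2 v t ≤ 0 := by
  by_contra! h₂
  have hfwd := hsol.iteratedDeriv_three_add_nonpos hv hpos hA hc hq hgrow hBg h₂
  have hbwd := hsol.comp_neg.iteratedDeriv_three_add_nonpos (hv.comp contDiff_neg)
    (fun t => hpos _) hA hc hq hgrow (fun t => hBg _) (t₀ := -t)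
    (by simpa [iteratedDeriv_comp_neg] using h₂)
  -- `hbwd` is the same bound for `t ↦ v (-t)`, namely `-v''' t + √A v'' t ≤ 0`.
  norm_num [iteratedDeriv_comp_neg] at hbwd
  nlinarith [sqrt_pos.2 hA]

theorem IsSol.eq_of_le {A B c q a : ℝ} {g v : ℝ → ℝ} (hsol : IsSol A B g v)
    (hv : ContDiff ℝ 4 v) (hA : 0 < A) (hc : 0 < c) (hq : 1 < q)
    (hgrow : ∀ t ≥ 1, c * t ^ q ≤ g t) (hmono : StrictMonoOn (fun t => g t / t) (Ioi 0))
    (ha : 0 < a) (hroot : g a = B * a) (hva : ∀ t, a ≤ v t) (t : ℝ) : v t = a := by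
  have hBg t : B * v t ≤ g (v t) := mul_le_of_eq_mul_of_le hmono ha hroot (hva t)
  have hconst t : v t = v 0 := eq_of_hasDerivAt_nonpos_of_bddBelow
    (hv.hasDerivAt_iteratedDeriv_one (by norm_num)) (hv.hasDerivAt_iteratedDeriv (by norm_num))
    (hsol.iteratedDeriv_two_nonpos hv (fun t => ha.trans_le (hva t)) hA hc hq hgrow hBg)
    ⟨a, forall_mem_range.2 hva⟩ t 0
  have hroot₀ : B * v 0 = g (v 0) := isSol_const_iff.1 (funext hconst ▸ hsol)
  rw [hconst]
  by_contra hne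
  exact (mul_lt_of_eq_mul_of_lt hmono ha hroot (lt_of_le_of_ne (hva 0) (Ne.symm hne))).ne hroot₀

theorem stmt_1 (n : ℕ) (hn : 5 ≤ n) (g : ℝ → ℝ) (hg : CondG n g)
    (A B : ℝ) (hA : A = ((n : ℝ) * ((n : ℝ) - 4) + 8) / 2)
    (hB : B = (n : ℝ) ^ 2 * ((n : ℝ) - 4) ^ 2 / 16) :
    (∃! a₀ : ℝ, 0 < a₀ ∧ g a₀ = B * a₀) ∧
    ∀ v : ℝ → ℝ, ContDiff ℝ 4 v → (∀ t, 0 < v t) → IsSol A B g v →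
      ∀ a₀ : ℝ, 0 < a₀ → g a₀ = B * a₀ →
        (⨅ t : ℝ, v t) ≤ a₀ ∧ ((⨅ t : ℝ, v t) = a₀ ↔ ∀ t, v t = a₀) := by
  obtain ⟨hC, -, -, hder, ⟨β, -, hβB, hβ⟩, ⟨q, c, hq, hc, hgrow⟩, -⟩ := hg
  have hA₀ : 0 < A := by
    have : (5 : ℝ) ≤ n := by exact_mod_cast hn
    rw [hA]; nlinarith
  have hder' t (ht : t > 0) : g t / t < deriv g t := (hder t ht).1
  have hmono := strictMonoOn_div_self (hC.differentiableOn one_ne_zero) hder'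
  refine ⟨existsUnique_pos_eq_mul hmono hC.continuousOn
    (exists_div_self_lt hder' hβ (hB ▸ hβB)) (exists_lt_div_self hc hq hgrow B), ?_⟩
  intro v hv hpos hsol a₀ ha₀ hroot
  have hbdd : BddBelow (range v) := ⟨0, forall_mem_range.2 fun t => (hpos t).le⟩
  have hconst (h : a₀ ≤ ⨅ t, v t) : ∀ t, v t = a₀ :=
    hsol.eq_of_le hv hA₀ hc hq hgrow hmono ha₀ hroot fun t => h.trans (ciInf_le hbdd t)
  have hinf (h : ∀ t, v t = a₀) : ⨅ t, v t = a₀ := by simp only [h, ciInf_const]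
  refine ⟨le_of_not_gt fun hlt => ?_, fun h => hconst h.ge, hinf⟩
  exact hlt.ne' (hinf (hconst hlt.le))
end

section
/- Let v, w : ℝ → ℝ be C⁴ nonnegative solutions of the ODE v''''(t) − A·v''(t) + B·v(t) = g(v(t)) with v(0) = w(0) and v'(0) = w'(0). Then v ≡ w on ℝ. -/
open Real Filter Set

noncomputable section

open Topology

/-!
Write `d = v - w` and `G = g ∘ v - g ∘ w`. Since `g t / t` is increasing, `g` is increasing and
superadditive on `[0, ∞)`, so `G ≥ 0` where `d > 0` and `G ≥ c d ^ q` where `d ≥ 1`. The operator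
factors as `(∂² - n²/4) (∂² - (n-4)²/4)`, so with `y = d'' - (n-4)²/4 · d` the system
`(d, d', y, y')` is cooperative: if `d''(0), d'''(0) ≥ 0` are not both zero, all four stay positive
on `(0, ∞)`. Then `d'''' ≥ c d ^ q`, and three integrations against `d'` give `d' ≥ κ d ^ p` with
`p > 1` for large `t`, which blows up in finite time. Swapping `v, w` and reflecting `t ↦ -t` reduce
every nonzero sign pattern of `(d''(0), d'''(0))` to this one, so the jets `(v, v', v'', v''')`
and `(w, w', w'', w''')` agree at `0`. Finally `g` is Lipschitz on each `[0, M]`, its derivative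
being at most `(n+4)/(n-4) · g(M)/M` there, so uniqueness for the first-order system satisfied
by the jets gives `v = w`.
-/

lemma lt_of_forall_hasDerivAt_pos {f f' : ℝ → ℝ} {a b : ℝ} (hf : ∀ t, HasDerivAt f (f' t) t)
    (hab : a < b) (h : ∀ t ∈ Ioo a b, 0 < f' t) : f a < f b := by
  refine strictMonoOn_of_hasDerivWithinAt_pos (convex_Icc a b)
    (fun t _ => (hf t).continuousAt.continuousWithinAt) (fun t _ => (hf t).hasDerivWithinAt)
    (by simpa only [interior_Icc] using h) (left_mem_Icc.2 hab.le) (right_mem_Icc.2 hab.le) hab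

lemma eventually_nhdsGT_pos_of_hasDerivAt {f f' : ℝ → ℝ} {a : ℝ}
    (hf : ∀ t, HasDerivAt f (f' t) t) (ha : 0 ≤ f a) (h : ∀ᶠ t in 𝓝[>] a, 0 < f' t) :
    ∀ᶠ t in 𝓝[>] a, 0 < f t := by
  obtain ⟨u, hau, hu⟩ := mem_nhdsGT_iff_exists_Ioo_subset.1 h
  filter_upwards [Ioo_mem_nhdsGT hau] with t ht
  exact ha.trans_lt <| lt_of_forall_hasDerivAt_pos hf ht.1
    fun s hs => hu ⟨hs.1, hs.2.trans ht.2⟩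

lemma eventually_nhdsGT_pos_of_jet {f f' : ℝ → ℝ} {a : ℝ} (hf : ∀ t, HasDerivAt f (f' t) t)
    (hf' : ContinuousAt f' a) (ha : 0 ≤ f a) (h : 0 < f a ∨ 0 < f' a) :
    ∀ᶠ t in 𝓝[>] a, 0 < f t := by
  rcases h with h | h
  · exact nhdsWithin_le_nhds ((hf a).continuousAt.eventually (eventually_gt_nhds h))
  · exact eventually_nhdsGT_pos_of_hasDerivAt hf ha
      (nhdsWithin_le_nhds (hf'.eventually (eventually_gt_nhds h)))

lemma forall_gt_of_isOpen_of_continuation {P : ℝ → Prop} {a : ℝ} (hP : IsOpen {t | P t})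
    (hstart : ∀ᶠ t in 𝓝[>] a, P t) (hstep : ∀ T > a, (∀ t ∈ Ioo a T, P t) → P T) :
    ∀ t > a, P t := by
  obtain ⟨ε, haε, hε⟩ := mem_nhdsGT_iff_exists_Ioo_subset.1 hstart
  by_contra! ⟨t₀, hat₀, ht₀⟩
  set S := Ici ((a + ε) / 2) ∩ {t | ¬P t}
  have hS : IsClosed S := isClosed_Ici.inter hP.isClosed_compl
  have hlow : ∀ t, a < t → t < ε → P t := fun t h1 h2 => hε ⟨h1, h2⟩
  have ht₀S : t₀ ∈ S := by
    refine ⟨mem_Ici.2 (not_lt.1 fun h => ht₀ (hlow t₀ hat₀ ?_)), ht₀⟩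
    linarith [mem_Ioi.1 haε]
  have hbdd : BddBelow S := ⟨(a + ε) / 2, fun t ht => ht.1⟩
  have hTS := hS.csInf_mem ⟨t₀, ht₀S⟩ hbdd
  have haT : a < sInf S := by linarith [mem_Ici.1 hTS.1, mem_Ioi.1 haε]
  refine hTS.2 (hstep _ haT fun t ht => ?_)
  by_cases htε : t < ε
  · exact hlow t ht.1 htε
  · by_contra hPt
    have hεt : (a + ε) / 2 ≤ t := by linarith [not_lt.1 htε, mem_Ioi.1 haε]
    exact not_le.2 ht.2 (csInf_le hbdd ⟨hεt, hPt⟩)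

lemma exists_monotoneOn_Ici_of_hasDerivAt {f f' : ℝ → ℝ}
    (h : ∀ᶠ t in atTop, HasDerivAt f (f' t) t ∧ 0 ≤ f' t) : ∃ a, MonotoneOn f (Ici a) := by
  obtain ⟨a, ha⟩ := eventually_atTop.1 h
  refine ⟨a, monotoneOn_of_hasDerivWithinAt_nonneg (f' := f') (convex_Ici a)
    (fun t ht => (ha t ht).1.continuousAt.continuousWithinAt) (fun t ht => ?_) fun t ht => ?_⟩
  all_goals rw [interior_Ici] at ht
  · exact (ha t ht.le).1.hasDerivWithinAt
  · exact (ha t ht.le).2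

lemma tendsto_atTop_of_le_deriv {f f' : ℝ → ℝ} {δ : ℝ} (hδ : 0 < δ)
    (hf : ∀ t, HasDerivAt f (f' t) t) (h : ∀ᶠ t in atTop, δ ≤ f' t) :
    Tendsto f atTop atTop := by
  obtain ⟨a, ha⟩ := exists_monotoneOn_Ici_of_hasDerivAt (f := fun t => f t - δ * t)
    (h.mono fun t ht => ⟨(hf t).sub ((hasDerivAt_id t).const_mul δ), by simpa using ht⟩)
  have hlin : Tendsto (fun t => f a - δ * a + δ * t) atTop atTop :=
    tendsto_atTop_add_const_left _ _ (tendsto_id.const_mul_atTop hδ)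
  refine tendsto_atTop_mono' _ ?_ hlin
  filter_upwards [eventually_ge_atTop a] with t ht
  have := ha self_mem_Ici ht ht
  simp only at this
  linarith

lemma eventually_rpow_le_of_le_deriv {u u' f f' : ℝ → ℝ} {c r : ℝ} (hc : 0 < c) (hr : 0 ≤ r)
    (hu : ∀ t, HasDerivAt u (u' t) t) (hf : ∀ t, HasDerivAt f (f' t) t)
    (hutop : Tendsto u atTop atTop) (h : ∀ᶠ t in atTop, c * u t ^ r * u' t ≤ f' t) :
    ∀ᶠ t in atTop, c / (r + 1) / 2 * u t ^ (r + 1) ≤ f t := by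
  set C := c / (r + 1) / 2
  have hC : 0 < C := by positivity
  have hderiv : ∀ t, HasDerivAt (fun t => f t - 2 * C * u t ^ (r + 1))
      (f' t - c * u t ^ r * u' t) t := fun t =>
    ((hf t).sub (((hu t).rpow_const (p := r + 1) (Or.inr (by linarith))).const_mul (2 * C)))
      |>.congr_deriv (by simp only [C, add_sub_cancel_right]; field_simp)
  obtain ⟨a, ha⟩ := exists_monotoneOn_Ici_of_hasDerivAt
    (h.mono fun t ht => ⟨hderiv t, sub_nonneg.2 ht⟩)
  have hgrow := ((tendsto_rpow_atTop (by linarith : 0 < r + 1)).comp hutop).eventually_ge_atTop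
    (-(f a - 2 * C * u a ^ (r + 1)) / C)
  filter_upwards [eventually_ge_atTop a, hgrow] with t hat ht
  have hmono := ha self_mem_Ici hat hat
  rw [Function.comp_apply, div_le_iff₀ hC] at ht
  simp only at hmono
  linarith

lemma false_of_rpow_le_deriv {f f' : ℝ → ℝ} {κ p : ℝ} (hκ : 0 < κ) (hp : 1 < p)
    (hf : ∀ t, HasDerivAt f (f' t) t) (hftop : Tendsto f atTop atTop)
    (h : ∀ᶠ t in atTop, κ * f t ^ p ≤ f' t) : False := by
  have hρ : 0 < (p - 1) * κ := mul_pos (by linarith) hκ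
  -- `f ^ (1 - p) > 0` would have to decrease at rate at least `(p - 1) κ` forever.
  have hderiv : ∀ᶠ t in atTop, HasDerivAt (fun t => -f t ^ (1 - p) - (p - 1) * κ * t)
      ((p - 1) * (f' t * (f t ^ p)⁻¹ - κ)) t ∧ 0 ≤ (p - 1) * (f' t * (f t ^ p)⁻¹ - κ) := by
    filter_upwards [h, hftop.eventually_gt_atTop 0] with t ht hft
    refine ⟨?_, mul_nonneg (by linarith) (sub_nonneg.2 ?_)⟩
    · refine (((hf t).rpow_const (p := 1 - p) (Or.inl hft.ne')).neg.sub
        ((hasDerivAt_id t).const_mul ((p - 1) * κ))).congr_deriv ?_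
      rw [sub_sub_cancel_left, rpow_neg hft.le]
      ring
    · rwa [← div_eq_mul_inv, le_div_iff₀ (by positivity)]
  obtain ⟨a, ha⟩ := exists_monotoneOn_Ici_of_hasDerivAt hderiv
  obtain ⟨t, hat, ht, hft⟩ := ((eventually_ge_atTop a).and ((eventually_ge_atTop
    ((-f a ^ (1 - p) - (p - 1) * κ * a) / -((p - 1) * κ))).and
    (hftop.eventually_gt_atTop 0))).exists
  have hmono := ha self_mem_Ici hat hat
  rw [div_le_iff_of_neg (by linarith)] at ht
  simp only at hmono
  linarith [rpow_pos_of_pos hft (1 - p)]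

lemma false_of_superlinear_fourth_order {d0 d1 d2 d3 d4 : ℝ → ℝ} {c q : ℝ} (hc : 0 < c)
    (hq : 1 < q) (h0 : ∀ t, HasDerivAt d0 (d1 t) t) (h1 : ∀ t, HasDerivAt d1 (d2 t) t)
    (h2 : ∀ t, HasDerivAt d2 (d3 t) t) (h3 : ∀ t, HasDerivAt d3 (d4 t) t)
    (hpos : ∀ᶠ t in atTop, 0 < d1 t ∧ 0 < d2 t ∧ 0 < d3 t)
    (hd4 : ∀ᶠ t in atTop, 1 ≤ d0 t → c * d0 t ^ q ≤ d4 t) : False := by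
  obtain ⟨a, ha⟩ := exists_monotoneOn_Ici_of_hasDerivAt
    (hpos.mono fun t ht => ⟨h1 t, ht.2.1.le⟩)
  obtain ⟨b, hab, hb⟩ := ((eventually_ge_atTop a).and hpos).exists
  have htop : Tendsto d0 atTop atTop := tendsto_atTop_of_le_deriv hb.1 h0 <| by
    filter_upwards [eventually_ge_atTop b] with t ht using ha hab (hab.trans ht) ht
  have hd4' : ∀ᶠ t in atTop, c * d0 t ^ q ≤ d4 t := by
    filter_upwards [hd4, htop.eventually_ge_atTop 1] with t h ht using h ht
  -- Multiply by `d1 = d0'` and integrate, three times: `(d3 d1)' ≥ c d0 ^ q d1`,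
  -- then `(d2 d1 ^ 2)' ≥ (d3 d1) d1` and `(d1 ^ 4)' = 4 (d2 d1 ^ 2) d1`.
  set c₁ := c / (q + 1) / 2
  set c₂ := c₁ / (q + 1 + 1) / 2
  set c₃ := 4 * c₂ / (q + 1 + 1 + 1) / 2
  have hA : ∀ᶠ t in atTop, c₁ * d0 t ^ (q + 1) ≤ d3 t * d1 t :=
    eventually_rpow_le_of_le_deriv hc (by linarith) h0 (fun t => (h3 t).mul (h1 t)) htop <| by
      filter_upwards [hd4', hpos] with t h ⟨h1, h2, h3⟩
      nlinarith [mul_le_mul_of_nonneg_right h h1.le, mul_pos h3 h2]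
  have hB : ∀ᶠ t in atTop, c₂ * d0 t ^ (q + 1 + 1) ≤ d2 t * d1 t ^ 2 :=
    eventually_rpow_le_of_le_deriv (by positivity) (by linarith) h0
      (fun t => (h2 t).mul ((h1 t).pow 2)) htop <| by
      filter_upwards [hA, hpos] with t h ⟨h1, h2, h3⟩
      simp only [Nat.cast_ofNat, Nat.reduceSub, pow_one]
      nlinarith [mul_le_mul_of_nonneg_right h h1.le, mul_pos (mul_pos h1 h2) h2]
  have hC : ∀ᶠ t in atTop, c₃ * d0 t ^ (q + 1 + 1 + 1) ≤ d1 t ^ 4 :=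
    eventually_rpow_le_of_le_deriv (by positivity) (by linarith) h0
      (fun t => (h1 t).pow 4) htop <| by
      filter_upwards [hB, hpos] with t h ⟨h1, h2, h3⟩
      simp only [Nat.cast_ofNat, Nat.reduceSub]
      nlinarith [mul_le_mul_of_nonneg_right h h1.le]
  have hc₃ : 0 < c₃ := by positivity
  refine false_of_rpow_le_deriv (rpow_pos_of_pos hc₃ (1 / 4)) (p := (q + 1 + 1 + 1) / 4)
    (by linarith) h0 htop ?_
  filter_upwards [hC, hpos, htop.eventually_gt_atTop 0] with t h ⟨h1, _⟩ ht
  have hpow : (c₃ ^ (1 / 4 : ℝ) * d0 t ^ ((q + 1 + 1 + 1) / 4)) ^ 4 =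
      c₃ * d0 t ^ (q + 1 + 1 + 1) := by
    rw [mul_pow, ← rpow_natCast, ← rpow_natCast (d0 t ^ _), ← rpow_mul hc₃.le, ← rpow_mul ht.le]
    norm_num
  exact (pow_le_pow_iff_left₀ (by positivity) h1.le (by norm_num)).1 (hpow ▸ h)

lemma forall_pos_of_cooperative {μ₁ μ₂ : ℝ} {d0 d1 y y1 G : ℝ → ℝ} (hμ₁ : 0 < μ₁)
    (hμ₂ : 0 ≤ μ₂) (h0 : ∀ t, HasDerivAt d0 (d1 t) t)
    (h1 : ∀ t, HasDerivAt d1 (y t + μ₂ * d0 t) t) (hy : ∀ t, HasDerivAt y (y1 t) t)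
    (hy1 : ∀ t, HasDerivAt y1 (μ₁ * y t + G t) t) (hG : ∀ t, 0 < d0 t → 0 ≤ G t)
    (hd0 : d0 0 = 0) (hd1 : d1 0 = 0) (hy0 : 0 ≤ y 0) (hy10 : 0 ≤ y1 0)
    (hne : 0 < y 0 ∨ 0 < y1 0) :
    ∀ t > 0, 0 < d0 t ∧ 0 < d1 t ∧ 0 < y t ∧ 0 < y1 t := by
  have hcont : ∀ {f f' : ℝ → ℝ}, (∀ t, HasDerivAt f (f' t) t) → Continuous f := fun h =>
    continuous_iff_continuousAt.2 fun t => (h t).continuousAt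
  refine forall_gt_of_isOpen_of_continuation ?_ ?_ fun T hT hP => ?_
  · exact (isOpen_lt continuous_const (hcont h0)).inter <|
      (isOpen_lt continuous_const (hcont h1)).inter <|
      (isOpen_lt continuous_const (hcont hy)).inter (isOpen_lt continuous_const (hcont hy1))
  · have hd2 : ∀ t, HasDerivAt (fun t => y t + μ₂ * d0 t) (y1 t + μ₂ * d1 t) t := fun t =>
      (hy t).add ((h0 t).const_mul μ₂)
    have ey := eventually_nhdsGT_pos_of_jet hy (hcont hy1).continuousAt hy0 hne
    have ed2 := eventually_nhdsGT_pos_of_jet (a := 0) hd2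
      ((hcont hy1).add (continuous_const.mul (hcont h1))).continuousAt
      (by simpa [hd0] using hy0) (by simpa [hd0, hd1] using hne)
    have ed1 := eventually_nhdsGT_pos_of_hasDerivAt h1 hd1.ge ed2
    have ed0 := eventually_nhdsGT_pos_of_hasDerivAt h0 hd0.ge ed1
    have ey1 := eventually_nhdsGT_pos_of_hasDerivAt hy1 hy10 <| by
      filter_upwards [ey, ed0] with t h h' using by nlinarith [hG t h']
    filter_upwards [ed0, ed1, ey, ey1] with t h0 h1 h2 h3 using ⟨h0, h1, h2, h3⟩
  · have hP0 := fun t ht => (hP t ht).1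
    have hPy := fun t ht => (hP t ht).2.2.1
    refine ⟨hd0 ▸ lt_of_forall_hasDerivAt_pos h0 hT fun t ht => (hP t ht).2.1,
      hd1 ▸ lt_of_forall_hasDerivAt_pos h1 hT fun t ht => ?_,
      hy0.trans_lt (lt_of_forall_hasDerivAt_pos hy hT fun t ht => (hP t ht).2.2.2),
      hy10.trans_lt (lt_of_forall_hasDerivAt_pos hy1 hT fun t ht => ?_)⟩
    · nlinarith [hP0 t ht, hPy t ht]
    · nlinarith [hG t (hP0 t ht), hPy t ht]

lemma false_of_nonneg_jet {μ₁ μ₂ c q : ℝ} {d0 d1 d2 d3 G : ℝ → ℝ} (hμ₁ : 0 < μ₁)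
    (hμ₂ : 0 ≤ μ₂) (hc : 0 < c) (hq : 1 < q) (h0 : ∀ t, HasDerivAt d0 (d1 t) t)
    (h1 : ∀ t, HasDerivAt d1 (d2 t) t) (h2 : ∀ t, HasDerivAt d2 (d3 t) t)
    (h3 : ∀ t, HasDerivAt d3 ((μ₁ + μ₂) * d2 t - μ₁ * μ₂ * d0 t + G t) t)
    (hG : ∀ t, 0 < d0 t → 0 ≤ G t) (hGq : ∀ t, 1 ≤ d0 t → c * d0 t ^ q ≤ G t)
    (hd0 : d0 0 = 0) (hd1 : d1 0 = 0) (hd2 : 0 ≤ d2 0) (hd3 : 0 ≤ d3 0)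
    (hne : 0 < d2 0 ∨ 0 < d3 0) : False := by
  have hpos := forall_pos_of_cooperative (y := fun t => d2 t - μ₂ * d0 t)
    (y1 := fun t => d3 t - μ₂ * d1 t) hμ₁ hμ₂ h0 (fun t => (h1 t).congr_deriv (by ring))
    (fun t => (h2 t).sub ((h0 t).const_mul μ₂))
    (fun t => ((h3 t).sub ((h1 t).const_mul μ₂)).congr_deriv (by ring))
    hG hd0 hd1 (by simpa [hd0]) (by simpa [hd1]) (by simpa [hd0, hd1])
  refine false_of_superlinear_fourth_order hc hq h0 h1 h2 h3 ?_ ?_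
  all_goals filter_upwards [eventually_gt_atTop 0] with t ht
  all_goals obtain ⟨hd0t, hd1t, hy, hy1⟩ := hpos t ht
  · exact ⟨hd1t, by nlinarith, by nlinarith⟩
  · intro h1t
    nlinarith [hGq t h1t, mul_pos hμ₁ hy, mul_nonneg hμ₂ hd0t.le]

lemma monotoneOn_div_self_of_le_deriv {g : ℝ → ℝ} (hd : DifferentiableOn ℝ g (Ioi 0))
    (h : ∀ t > 0, g t / t ≤ deriv g t) : MonotoneOn (fun t => g t / t) (Ioi 0) := by
  have hderiv : ∀ t ∈ Ioi (0 : ℝ), HasDerivAt (fun t => g t / t)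
      ((deriv g t * t - g t * 1) / t ^ 2) t := fun t ht =>
    (hd.differentiableAt (Ioi_mem_nhds ht)).hasDerivAt.div (hasDerivAt_id t) (ne_of_gt ht)
  refine monotoneOn_of_hasDerivWithinAt_nonneg
    (f' := fun t => (deriv g t * t - g t * 1) / t ^ 2) (convex_Ioi 0)
    (fun t ht => (hderiv t ht).continuousAt.continuousWithinAt) (fun t ht => ?_) fun t ht => ?_
  all_goals rw [interior_Ioi] at ht
  · exact (hderiv t ht).hasDerivWithinAt
  · have := (div_le_iff₀ ht).1 (h t ht)
    exact div_nonneg (by linarith) (sq_nonneg t)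

lemma monotoneOn_Ici_of_monotoneOn_div_self {g : ℝ → ℝ} (hg0 : g 0 = 0)
    (hpos : ∀ t > 0, 0 ≤ g t) (hm : MonotoneOn (fun t => g t / t) (Ioi 0)) :
    MonotoneOn g (Ici 0) := by
  intro x hx y hy hxy
  rcases (mem_Ici.1 hx).eq_or_lt with rfl | hx
  · rcases (mem_Ici.1 hy).eq_or_lt with rfl | hy
    · rfl
    · exact hg0.symm ▸ hpos y hy
  have hy : 0 < y := hx.trans_le hxy
  calc g x = x * (g x / x) := by field_simp
    _ ≤ y * (g y / y) := mul_le_mul hxy (hm hx hy hxy) (div_nonneg (hpos x hx) hx.le) hy.le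
    _ = g y := by field_simp

lemma add_le_of_monotoneOn_div_self {g : ℝ → ℝ} (hg0 : g 0 = 0)
    (hm : MonotoneOn (fun t => g t / t) (Ioi 0)) {x y : ℝ} (hx : 0 ≤ x) (hy : 0 ≤ y) :
    g x + g y ≤ g (x + y) := by
  rcases hx.eq_or_lt with rfl | hx
  · simp [hg0]
  rcases hy.eq_or_lt with rfl | hy
  · simp [hg0]
  have hxy : 0 < x + y := by positivity
  have hle : ∀ s > 0, s ≤ x + y → g s ≤ s * (g (x + y) / (x + y)) := fun s hs hs' =>
    calc g s = s * (g s / s) := by field_simp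
      _ ≤ s * (g (x + y) / (x + y)) := mul_le_mul_of_nonneg_left (hm hs hxy hs') hs.le
  calc g x + g y ≤ x * (g (x + y) / (x + y)) + y * (g (x + y) / (x + y)) :=
        add_le_add (hle x hx (by linarith)) (hle y hy (by linarith))
    _ = g (x + y) := by field_simp

lemma lipschitzOnWith_of_monotoneOn_of_deriv_le {g : ℝ → ℝ} {a b C : ℝ} (hC : 0 ≤ C)
    (hcont : ContinuousOn g (Icc a b)) (hd : DifferentiableOn ℝ g (Ioo a b))
    (hmono : MonotoneOn g (Icc a b)) (hder : ∀ t ∈ Ioo a b, deriv g t ≤ C) :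
    LipschitzOnWith C.toNNReal g (Icc a b) := by
  have hgrowth := (convex_Icc a b).image_sub_le_mul_sub_of_deriv_le hcont
    (by rwa [interior_Icc]) (by rwa [interior_Icc])
  refine LipschitzOnWith.of_le_add_mul' C fun x hx y hy => ?_
  rcases le_total x y with hxy | hxy
  · linarith [hmono hx hy hxy, mul_nonneg hC (dist_nonneg (x := x) (y := y))]
  · rw [Real.dist_eq, abs_of_nonneg (sub_nonneg.2 hxy)]
    linarith [hgrowth y hy x hx hxy]

namespace CondG

variable {n : ℕ} {g : ℝ → ℝ}

lemma differentiableOn (hg : CondG n g) : DifferentiableOn ℝ g (Ioi 0) :=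
  hg.1.differentiableOn one_ne_zero

lemma monotoneOn_div_self (hg : CondG n g) : MonotoneOn (fun t => g t / t) (Ioi 0) :=
  monotoneOn_div_self_of_le_deriv hg.differentiableOn fun t ht => (hg.2.2.2.1 t ht).1.le

lemma monotoneOn (hg : CondG n g) : MonotoneOn g (Ici 0) :=
  monotoneOn_Ici_of_monotoneOn_div_self hg.2.2.2.2.2.2 (fun t ht => (hg.2.1 t ht).le)
    hg.monotoneOn_div_self

lemma add_le (hg : CondG n g) {x y : ℝ} (hx : 0 ≤ x) (hy : 0 ≤ y) : g x + g y ≤ g (x + y) :=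
  add_le_of_monotoneOn_div_self hg.2.2.2.2.2.2 hg.monotoneOn_div_self hx hy

lemma continuousOn (hg : CondG n g) : ContinuousOn g (Ici 0) := by
  intro x hx
  rcases (mem_Ici.1 hx).eq_or_lt with rfl | hx
  · refine continuousWithinAt_Ioi_iff_Ici.1 ?_
    rw [ContinuousWithinAt, hg.2.2.2.2.2.2]
    exact hg.2.2.1
  · exact (hg.differentiableOn.continuousOn.continuousAt (Ioi_mem_nhds hx)).continuousWithinAt

lemma exists_lipschitzOnWith (hn : 4 < n) (hg : CondG n g) (M : ℝ) :
    ∃ K, LipschitzOnWith K g (Icc 0 M) := by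
  set M' := max M 1
  have hK : 0 ≤ ((n : ℝ) + 4) / ((n : ℝ) - 4) := by
    have : (4 : ℝ) < n := by exact_mod_cast hn
    exact div_nonneg (by positivity) (by linarith)
  refine ⟨_, (lipschitzOnWith_of_monotoneOn_of_deriv_le (a := 0) (b := M')
    (C := ((n : ℝ) + 4) / ((n : ℝ) - 4) * (g M' / M'))
    (mul_nonneg hK (div_nonneg (hg.2.1 M' (by positivity)).le (by positivity)))
    (hg.continuousOn.mono Icc_subset_Ici_self) (hg.differentiableOn.mono Ioo_subset_Ioi_self)
    (hg.monotoneOn.mono Icc_subset_Ici_self) fun t ht => ?_).mono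
    (Icc_subset_Icc_right (le_max_left M 1))⟩
  exact (hg.2.2.2.1 t ht.1).2.trans <| mul_le_mul_of_nonneg_left
    (hg.monotoneOn_div_self ht.1 (ht.1.trans ht.2) ht.2.le) hK

end CondG

lemma hasDerivAt_iteratedDeriv_of_contDiff {v : ℝ → ℝ} {n k : ℕ} (hv : ContDiff ℝ n v)
    (hk : k < n) (t : ℝ) : HasDerivAt (iteratedDeriv k v) (iteratedDeriv (k + 1) v t) t := by
  rw [iteratedDeriv_succ]
  exact (hv.differentiable_iteratedDeriv k (by exact_mod_cast hk) t).hasDerivAt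

def IsNonnegSol (A B : ℝ) (g v : ℝ → ℝ) : Prop :=
  ContDiff ℝ 4 v ∧ (∀ t, 0 ≤ v t) ∧ IsSol A B g v

namespace IsNonnegSol

variable {A B : ℝ} {g v w : ℝ → ℝ}

lemma comp_neg (hv : IsNonnegSol A B g v) : IsNonnegSol A B g (fun t => v (-t)) := by
  obtain ⟨hv4, hvnn, hvsol⟩ := hv
  refine ⟨hv4.comp contDiff_neg, fun t => hvnn (-t), fun t => ?_⟩
  have hsign : ((-1 : ℝ)) ^ 4 = 1 ∧ ((-1 : ℝ)) ^ 2 = 1 := by norm_num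
  simpa [iteratedDeriv_comp_neg, hsign] using hvsol (-t)

lemma iteratedDeriv_two_three_eq_of_le {μ₁ μ₂ c q : ℝ} (hμ₁ : 0 < μ₁) (hμ₂ : 0 ≤ μ₂) (hc : 0 < c)
    (hq : 1 < q) (hA : A = μ₁ + μ₂) (hB : B = μ₁ * μ₂) (hmono : MonotoneOn g (Ici 0))
    (hadd : ∀ x y, 0 ≤ x → 0 ≤ y → g x + g y ≤ g (x + y)) (hgrow : ∀ t ≥ 1, c * t ^ q ≤ g t)
    (hv : IsNonnegSol A B g v) (hw : IsNonnegSol A B g w) (h0 : v 0 = w 0)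
    (h1 : deriv v 0 = deriv w 0) (h2 : iteratedDeriv 2 w 0 ≤ iteratedDeriv 2 v 0)
    (h3 : iteratedDeriv 3 w 0 ≤ iteratedDeriv 3 v 0) :
    iteratedDeriv 2 v 0 = iteratedDeriv 2 w 0 ∧ iteratedDeriv 3 v 0 = iteratedDeriv 3 w 0 := by
  by_contra hne
  set d : ℕ → ℝ → ℝ := fun k t => iteratedDeriv k v t - iteratedDeriv k w t with hd
  have hder : ∀ k < 4, ∀ t, HasDerivAt (d k) (d (k + 1) t) t := fun k hk t =>
    (hasDerivAt_iteratedDeriv_of_contDiff hv.1 hk t).sub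
      (hasDerivAt_iteratedDeriv_of_contDiff hw.1 hk t)
  have hd0 : ∀ t, d 0 t = v t - w t := fun t => by simp [hd]
  refine false_of_nonneg_jet hμ₁ hμ₂ hc hq (hder 0 (by norm_num)) (hder 1 (by norm_num))
    (hder 2 (by norm_num)) (G := fun t => g (v t) - g (w t))
    (fun t => (hder 3 (by norm_num) t).congr_deriv ?_) (fun t ht => ?_) (fun t ht => ?_)
    (by simp [hd0, h0]) (by simp [hd, h1]) (by simpa [hd] using h2) (by simpa [hd] using h3) ?_
  · have hv4 := hv.2.2 t
    have hw4 := hw.2.2 t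
    simp only [hd, hA, hB, iteratedDeriv_zero, Nat.reduceAdd] at hv4 hw4 ⊢
    linarith
  · rw [hd0] at ht
    exact sub_nonneg.2 (hmono (hw.2.1 t) (hv.2.1 t) (by linarith))
  · rw [hd0] at ht ⊢
    have := hadd (w t) (v t - w t) (hw.2.1 t) (by linarith)
    rw [add_sub_cancel] at this
    linarith [hgrow _ ht]
  · simp only [hd, sub_pos]
    contrapose! hne
    exact ⟨le_antisymm hne.1 h2, le_antisymm hne.2 h3⟩

lemma iteratedDeriv_two_three_eq {μ₁ μ₂ c q : ℝ} (hμ₁ : 0 < μ₁) (hμ₂ : 0 ≤ μ₂) (hc : 0 < c)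
    (hq : 1 < q) (hA : A = μ₁ + μ₂) (hB : B = μ₁ * μ₂) (hmono : MonotoneOn g (Ici 0))
    (hadd : ∀ x y, 0 ≤ x → 0 ≤ y → g x + g y ≤ g (x + y)) (hgrow : ∀ t ≥ 1, c * t ^ q ≤ g t)
    (hv : IsNonnegSol A B g v) (hw : IsNonnegSol A B g w) (h0 : v 0 = w 0)
    (h1 : deriv v 0 = deriv w 0) :
    iteratedDeriv 2 v 0 = iteratedDeriv 2 w 0 ∧ iteratedDeriv 3 v 0 = iteratedDeriv 3 w 0 := by
  have key := fun {v w : ℝ → ℝ} =>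
    @iteratedDeriv_two_three_eq_of_le A B g v w μ₁ μ₂ c q hμ₁ hμ₂ hc hq hA hB hmono hadd hgrow
  have hsign : ((-1 : ℝ)) ^ 3 = -1 ∧ ((-1 : ℝ)) ^ 2 = 1 := by norm_num
  have h0' : v (-0) = w (-0) := by rwa [neg_zero]
  have h1' : deriv (fun t => v (-t)) 0 = deriv (fun t => w (-t)) 0 := by
    simp [deriv_comp_neg, h1]
  rcases le_total (iteratedDeriv 2 w 0) (iteratedDeriv 2 v 0) with h2 | h2 <;>
  rcases le_total (iteratedDeriv 3 w 0) (iteratedDeriv 3 v 0) with h3 | h3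
  · exact key hv hw h0 h1 h2 h3
  · simpa [iteratedDeriv_comp_neg, hsign] using key hv.comp_neg hw.comp_neg h0' h1'
      (by simpa [iteratedDeriv_comp_neg, hsign]) (by simpa [iteratedDeriv_comp_neg, hsign])
  · simpa [iteratedDeriv_comp_neg, hsign, eq_comm] using key hw.comp_neg hv.comp_neg h0'.symm
      h1'.symm (by simpa [iteratedDeriv_comp_neg, hsign]) (by simpa [iteratedDeriv_comp_neg, hsign])
  · simpa [eq_comm] using key hw hv h0.symm h1.symm h2 h3

end IsNonnegSol

def jet (v : ℝ → ℝ) (t : ℝ) : Fin 4 → ℝ := fun i => iteratedDeriv i v t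

def jetField (A B : ℝ) (g : ℝ → ℝ) (U : Fin 4 → ℝ) : Fin 4 → ℝ :=
  ![U 1, U 2, U 3, A * U 2 - B * U 0 + g (U 0)]

lemma hasDerivAt_jet {A B : ℝ} {g v : ℝ → ℝ} (hv : ContDiff ℝ 4 v) (hsol : IsSol A B g v)
    (t : ℝ) : HasDerivAt (jet v) (jetField A B g (jet v t)) t := by
  rw [hasDerivAt_pi]
  intro i
  fin_cases i
  · exact hasDerivAt_iteratedDeriv_of_contDiff hv (by norm_num) t
  · exact hasDerivAt_iteratedDeriv_of_contDiff hv (by norm_num) t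
  · exact hasDerivAt_iteratedDeriv_of_contDiff hv (by norm_num) t
  · refine (hasDerivAt_iteratedDeriv_of_contDiff hv (k := 3) (by norm_num) t).congr_deriv ?_
    show iteratedDeriv 4 v t =
      A * iteratedDeriv 2 v t - B * iteratedDeriv 0 v t + g (iteratedDeriv 0 v t)
    rw [iteratedDeriv_zero]
    linarith [hsol t]

lemma lipschitzOnWith_jetField {A B M : ℝ} {g : ℝ → ℝ} {K : NNReal}
    (hg : LipschitzOnWith K g (Icc 0 M)) :
    LipschitzOnWith (1 + ‖A‖₊ + ‖B‖₊ + K) (jetField A B g) {U | U 0 ∈ Icc 0 M} := by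
  refine LipschitzOnWith.of_dist_le_mul fun U hU V hV => (dist_pi_le_iff (by positivity)).2 ?_
  have hd : ∀ j, dist (U j) (V j) ≤ dist U V := dist_le_pi_dist U V
  have hle : ∀ j, dist (U j) (V j) ≤ ↑(1 + ‖A‖₊ + ‖B‖₊ + K) * dist U V := fun j =>
    (hd j).trans (le_mul_of_one_le_left dist_nonneg <| by
      push_cast
      linarith [norm_nonneg A, norm_nonneg B, K.2])
  intro i
  fin_cases i
  · exact hle 1
  · exact hle 2
  · exact hle 3
  · have hmul : ∀ a x y : ℝ, dist (a * x) (a * y) = ‖a‖ * dist x y := fun a x y => by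
      rw [Real.dist_eq, Real.dist_eq, ← mul_sub, abs_mul, Real.norm_eq_abs]
    calc dist (A * U 2 - B * U 0 + g (U 0)) (A * V 2 - B * V 0 + g (V 0))
        ≤ dist (A * U 2) (A * V 2) + dist (B * U 0) (B * V 0) + dist (g (U 0)) (g (V 0)) :=
          (dist_add_add_le _ _ _ _).trans (add_le_add_left (dist_sub_sub_le _ _ _ _) _)
      _ ≤ ‖A‖ * dist U V + ‖B‖ * dist U V + K * dist U V := by
          rw [hmul, hmul]
          gcongr
          exacts [hd 2, hd 0, (hg.dist_le_mul _ hU _ hV).trans (by gcongr; exact hd 0)]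
      _ ≤ ↑(1 + ‖A‖₊ + ‖B‖₊ + K) * dist U V := by
          push_cast
          nlinarith [dist_nonneg (x := U) (y := V)]

lemma IsNonnegSol.eq_of_jet_eq {A B : ℝ} {g v w : ℝ → ℝ}
    (hg : ∀ M, ∃ K, LipschitzOnWith K g (Icc 0 M)) (hv : IsNonnegSol A B g v)
    (hw : IsNonnegSol A B g w) (h : jet v 0 = jet w 0) : v = w := by
  funext t
  set R := |t| + 1
  obtain ⟨Mv, hMv⟩ := (isCompact_Icc (a := -R) (b := R)).exists_bound_of_continuousOn
    hv.1.continuous.continuousOn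
  obtain ⟨Mw, hMw⟩ := (isCompact_Icc (a := -R) (b := R)).exists_bound_of_continuousOn
    hw.1.continuous.continuousOn
  obtain ⟨K, hK⟩ := hg (max Mv Mw)
  have hmem : ∀ u : ℝ → ℝ, IsNonnegSol A B g u → (∀ s ∈ Icc (-R) R, ‖u s‖ ≤ max Mv Mw) →
      ∀ s ∈ Ioo (-R) R, HasDerivAt (jet u) (jetField A B g (jet u s)) s ∧
        jet u s ∈ {U : Fin 4 → ℝ | U 0 ∈ Icc 0 (max Mv Mw)} := fun u hu hM s hs =>
    ⟨hasDerivAt_jet hu.1 hu.2.2 s, hu.2.1 s,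
      (le_abs_self _).trans (hM s (Ioo_subset_Icc_self hs))⟩
  have heq := ODE_solution_unique_of_mem_Ioo (fun _ _ => lipschitzOnWith_jetField hK)
    (show (0 : ℝ) ∈ Ioo (-R) R by constructor <;> linarith [abs_nonneg t])
    (hmem v hv fun s hs => (hMv s hs).trans (le_max_left _ _))
    (hmem w hw fun s hs => (hMw s hs).trans (le_max_right _ _)) h
    (show t ∈ Ioo (-R) R by constructor <;> linarith [neg_abs_le t, le_abs_self t])
  simpa [jet] using congrFun heq 0

theorem stmt_10 (n : ℕ) (hn : 5 ≤ n) (g : ℝ → ℝ) (hg : CondG n g)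
    (A B : ℝ) (hA : A = ((n : ℝ) * ((n : ℝ) - 4) + 8) / 2)
    (hB : B = (n : ℝ) ^ 2 * ((n : ℝ) - 4) ^ 2 / 16)
    (v w : ℝ → ℝ) (hv4 : ContDiff ℝ 4 v) (hw4 : ContDiff ℝ 4 w)
    (hvnn : ∀ t, 0 ≤ v t) (hwnn : ∀ t, 0 ≤ w t)
    (hvsol : IsSol A B g v) (hwsol : IsSol A B g w)
    (h0 : v 0 = w 0) (h1 : deriv v 0 = deriv w 0) :
    ∀ t, v t = w t := by
  obtain ⟨q, c, hq, hc, hgrow⟩ := hg.2.2.2.2.2.1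
  have hv : IsNonnegSol A B g v := ⟨hv4, hvnn, hvsol⟩
  have hw : IsNonnegSol A B g w := ⟨hw4, hwnn, hwsol⟩
  have hn' : (5 : ℝ) ≤ n := by exact_mod_cast hn
  -- `∂⁴ - A ∂² + B = (∂² - n²/4) (∂² - (n-4)²/4)`
  obtain ⟨h2, h3⟩ := hv.iteratedDeriv_two_three_eq (μ₁ := (n : ℝ) ^ 2 / 4)
    (μ₂ := ((n : ℝ) - 4) ^ 2 / 4) (by positivity) (by positivity) hc hq (by rw [hA]; ring)
    (by rw [hB]; ring) hg.monotoneOn (fun x y hx hy => hg.add_le hx hy) hgrow hw h0 h1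
  have hjet : jet v 0 = jet w 0 := by
    funext i
    fin_cases i <;> simp [jet, h0, h1, h2, h3]
  exact congrFun (hv.eq_of_jet_eq (hg.exists_lipschitzOnWith (by omega)) hw hjet)
end
end

section
/- Let (vₙ) be a sequence of C⁴ positive solutions of the ODE v''''(t) − A·v''(t) + B·v(t) = g(v(t)) such that each vₙ is periodic with period Lₙ > 0, attains its minimum value aₙ = min_{t ∈ ℝ} vₙ(t), and aₙ → 0 as n → ∞. Then Lₙ → ∞ as n → ∞. -/
/-!
With `lam = (n/2)²` and `r = (n-4)/2` the equation reads `(d² - lam)(d² - r²) v = g(v)`, so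
`w = v'' - r² v` satisfies `w'' = lam w + g(v)`. For a positive periodic solution, looking at a
maximum of `w` gives `w < 0`, i.e. `v'' < r² v`, and comparison with `a cosh (r (t - t₀))` at a
minimum point `t₀` of `v` bounds `max v ≤ a cosh (r L)`. Looking instead at a minimum of `w` and a
maximum `M` of `v` gives `lam r² M ≤ g(M)`; as `g(s)/s < g'(s) → β < lam r²`, this keeps `M` above
a fixed `δ > 0`. Hence `δ < aₘ cosh (r Lₘ)`, and `aₘ → 0` forces `Lₘ → ∞`.
-/

open Real Filter Set

noncomputable section

open Function Topology

namespace Function.Periodic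

section Deriv

variable {F : Type*} [NormedAddCommGroup F] [NormedSpace ℝ F] {f : ℝ → F} {c : ℝ}

protected theorem deriv (hf : Periodic f c) : Periodic (deriv f) c := fun t => by
  rw [← deriv_comp_add_const, hf.funext]

protected theorem iteratedDeriv (hf : Periodic f c) (k : ℕ) :
    Periodic (iteratedDeriv k f) c := by
  induction k with
  | zero => simpa
  | succ k ih => rw [iteratedDeriv_succ]; exact ih.deriv

end Deriv

variable {α : Type*} [LinearOrder α] [TopologicalSpace α] {f : ℝ → α} {c : ℝ}

theorem exists_forall_ge [ClosedIciTopology α] (hf : Periodic f c) (hc : c ≠ 0)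
    (hcont : Continuous f) : ∃ x, ∀ y, f y ≤ f x := by
  obtain ⟨_, ⟨x, rfl⟩, hx⟩ :=
    (hf.compact_of_continuous hc hcont).exists_isGreatest (range_nonempty f)
  exact ⟨x, fun y => hx ⟨y, rfl⟩⟩

theorem exists_forall_le [ClosedIicTopology α] (hf : Periodic f c) (hc : c ≠ 0)
    (hcont : Continuous f) : ∃ x, ∀ y, f x ≤ f y := by
  obtain ⟨_, ⟨x, rfl⟩, hx⟩ :=
    (hf.compact_of_continuous hc hcont).exists_isLeast (range_nonempty f)
  exact ⟨x, fun y => hx ⟨y, rfl⟩⟩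

end Function.Periodic

theorem ContDiff.hasDerivAt_iteratedDeriv_s13 {𝕜 F : Type*} [NontriviallyNormedField 𝕜]
    [NormedAddCommGroup F] [NormedSpace 𝕜 F] {N : WithTop ℕ∞} {f : 𝕜 → F}
    (hf : ContDiff 𝕜 N f) {k : ℕ} (hk : (k : WithTop ℕ∞) < N) (x : 𝕜) :
    HasDerivAt (iteratedDeriv k f) (iteratedDeriv (k + 1) f x) x := by
  rw [iteratedDeriv_succ]
  exact (hf.differentiable_iteratedDeriv k hk x).hasDerivAt

section SecondDerivativeTest

variable {f f' : ℝ → ℝ} {x a : ℝ}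

theorem IsLocalMax.nonpos_of_hasDerivAt_of_hasDerivAt (h : IsLocalMax f x)
    (hf : ∀ y, HasDerivAt f (f' y) y) (hf' : HasDerivAt f' a x) : a ≤ 0 := by
  have hderiv : deriv f = f' := funext fun y => (hf y).deriv
  by_contra! ha
  rw [← hf'.deriv, ← hderiv] at ha
  have hmin := isLocalMin_of_deriv_deriv_pos ha h.deriv_eq_zero (hf x).continuousAt
  have hconst : f =ᶠ[𝓝 x] fun _ => f x :=
    (h.and hmin).mono fun y hy => le_antisymm hy.1 hy.2
  simp [hconst.deriv.deriv_eq] at ha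

theorem IsLocalMin.nonneg_of_hasDerivAt_of_hasDerivAt (h : IsLocalMin f x)
    (hf : ∀ y, HasDerivAt f (f' y) y) (hf' : HasDerivAt f' a x) : 0 ≤ a :=
  neg_nonpos.1 <| h.neg.nonpos_of_hasDerivAt_of_hasDerivAt (fun y => (hf y).neg) hf'.neg

end SecondDerivativeTest

theorem nonpos_of_hasDerivAt_of_le_sq_mul {u u' u'' : ℝ → ℝ} {r t₀ : ℝ}
    (hu : ∀ t, HasDerivAt u (u' t) t) (hu' : ∀ t, HasDerivAt u' (u'' t) t)
    (hle : ∀ t, u'' t ≤ r ^ 2 * u t) (h₀ : u t₀ = 0) (h₀' : u' t₀ = 0) (t : ℝ) :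
    u t ≤ 0 := by
  have hexp (k s : ℝ) : HasDerivAt (fun s => exp (k * s)) (exp (k * s) * k) s := by
    simpa using ((hasDerivAt_id s).const_mul k).exp
  set F := fun s => (u' s - r * u s) * exp (r * s) with hF_def
  -- `F' = (u'' - r² u) e^{r s} ≤ 0` and `F t₀ = 0`, so `F` has the sign of `t₀ - s`, and so has
  -- the derivative `F s e^{-2 r s}` of `u e^{-r s}`, which is therefore maximal at `t₀`.
  have hF : Antitone F := by
    refine antitone_of_hasDerivAt_nonpos (f' := fun s => (u'' s - r ^ 2 * u s) * exp (r * s))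
      (fun s => ?_) fun s => mul_nonpos_of_nonpos_of_nonneg (sub_nonpos.2 (hle s)) (exp_pos _).le
    exact (((hu' s).sub ((hu s).const_mul r)).mul (hexp r s)).congr_deriv
      (by simp only [Pi.sub_apply]; ring)
  have hG (s : ℝ) : HasDerivAt (fun s => u s * exp (-r * s)) (F s * exp (-(2 * r) * s)) s := by
    refine ((hu s).mul (hexp (-r) s)).congr_deriv ?_
    rw [hF_def, mul_assoc, ← exp_add]
    ring_nf
  have hF₀ : F t₀ = 0 := by simp [hF_def, h₀, h₀']
  have hmax : IsMaxOn (fun s => u s * exp (-r * s)) univ t₀ := by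
    refine isMaxOn_univ_of_mono_anti ?_ ?_
    · refine monotoneOn_of_hasDerivWithinAt_nonneg (convex_Iic t₀)
        (fun s _ => (hG s).continuousAt.continuousWithinAt) (fun s _ => (hG s).hasDerivWithinAt)
        fun s hs => mul_nonneg (hF₀.symm.trans_le (hF (interior_subset hs : s ∈ Iic t₀)))
          (exp_pos _).le
    · refine antitoneOn_of_hasDerivWithinAt_nonpos (convex_Ici t₀)
        (fun s _ => (hG s).continuousAt.continuousWithinAt) (fun s _ => (hG s).hasDerivWithinAt)
        fun s hs => mul_nonpos_of_nonpos_of_nonneg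
          ((hF (interior_subset hs)).trans_eq hF₀) (exp_pos _).le
  have := hmax (mem_univ t)
  simp only [mem_ofPred_eq, h₀, zero_mul] at this
  exact nonpos_of_mul_nonpos_left this (exp_pos _)

theorem le_mul_cosh_of_hasDerivAt {v v' v'' : ℝ → ℝ} {r t₀ : ℝ}
    (hv : ∀ t, HasDerivAt v (v' t) t) (hv' : ∀ t, HasDerivAt v' (v'' t) t)
    (hle : ∀ t, v'' t ≤ r ^ 2 * v t) (h₀ : v' t₀ = 0) (t : ℝ) :
    v t ≤ v t₀ * cosh (r * (t - t₀)) := by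
  have hlin (s : ℝ) : HasDerivAt (fun s => r * (s - t₀)) r s := by
    simpa using ((hasDerivAt_id s).sub_const t₀).const_mul r
  refine sub_nonpos.1 <| nonpos_of_hasDerivAt_of_le_sq_mul (t₀ := t₀) (r := r)
    (u := fun s => v s - v t₀ * cosh (r * (s - t₀)))
    (u' := fun s => v' s - v t₀ * (sinh (r * (s - t₀)) * r))
    (u'' := fun s => v'' s - v t₀ * (cosh (r * (s - t₀)) * r * r))
    (fun s => (hv s).sub (((hlin s).cosh).const_mul _))
    (fun s => (hv' s).sub ((((hlin s).sinh).mul_const r).const_mul _))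
    (fun s => ?_) (by simp) (by simp [h₀]) t
  linear_combination hle s

theorem Function.Periodic.lt_zero_of_hasDerivAt_eq_mul_add {w w' h : ℝ → ℝ} {c lam : ℝ}
    (hw : Periodic w c) (hc : c ≠ 0) (hlam : 0 < lam) (hh : ∀ t, 0 < h t)
    (H : ∀ t, HasDerivAt w (w' t) t) (H' : ∀ t, HasDerivAt w' (lam * w t + h t) t) (t : ℝ) :
    w t < 0 := by
  obtain ⟨t₁, ht₁⟩ :=
    hw.exists_forall_ge hc (continuous_iff_continuousAt.2 fun t => (H t).continuousAt)
  have hmax : IsLocalMax w t₁ := .of_forall ht₁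
  have hw'' := hmax.nonpos_of_hasDerivAt_of_hasDerivAt H (H' t₁)
  have : lam * w t₁ < 0 := by linarith [hh t₁]
  exact (ht₁ t).trans_lt (neg_of_mul_neg_right this hlam.le)

namespace IsSol

variable {lam r c : ℝ} {g v : ℝ → ℝ}

theorem hasDerivAt_factor (hsol : IsSol (lam + r ^ 2) (lam * r ^ 2) g v) (hv : ContDiff ℝ 4 v)
    (t : ℝ) :
    HasDerivAt (fun s => iteratedDeriv 2 v s - r ^ 2 * v s)
      (iteratedDeriv 3 v t - r ^ 2 * iteratedDeriv 1 v t) t ∧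
    HasDerivAt (fun s => iteratedDeriv 3 v s - r ^ 2 * iteratedDeriv 1 v s)
      (lam * (iteratedDeriv 2 v t - r ^ 2 * v t) + g (v t)) t := by
  have hd (k : ℕ) (hk : k < 4) := hv.hasDerivAt_iteratedDeriv_s13 (k := k) (by exact_mod_cast hk) t
  refine ⟨(hd 2 (by norm_num)).sub (by simpa using (hd 0 (by norm_num)).const_mul (r ^ 2)), ?_⟩
  refine ((hd 3 (by norm_num)).sub ((hd 1 (by norm_num)).const_mul (r ^ 2))).congr_deriv ?_
  linear_combination hsol t

theorem iteratedDeriv_two_lt (hsol : IsSol (lam + r ^ 2) (lam * r ^ 2) g v) (hv : ContDiff ℝ 4 v)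
    (hper : Periodic v c) (hc : c ≠ 0) (hlam : 0 < lam) (hg : ∀ t, 0 < g (v t)) (t : ℝ) :
    iteratedDeriv 2 v t < r ^ 2 * v t :=
  sub_neg.1 <| Periodic.lt_zero_of_hasDerivAt_eq_mul_add
    (fun t => by simp only [hper.iteratedDeriv 2 t, hper t]) hc hlam hg
    (fun t => (hsol.hasDerivAt_factor hv t).1) (fun t => (hsol.hasDerivAt_factor hv t).2) t

theorem mul_le_of_forall_le (hsol : IsSol (lam + r ^ 2) (lam * r ^ 2) g v) (hv : ContDiff ℝ 4 v)
    (hper : Periodic v c) (hc : c ≠ 0) (hlam : 0 ≤ lam) (hg : MonotoneOn g (range v)) {t₁ : ℝ}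
    (hmax : ∀ t, v t ≤ v t₁) :
    lam * r ^ 2 * v t₁ ≤ g (v t₁) := by
  set w := fun s => iteratedDeriv 2 v s - r ^ 2 * v s
  have hw (t : ℝ) := hsol.hasDerivAt_factor hv t
  obtain ⟨t₂, ht₂⟩ := Periodic.exists_forall_le (f := w)
    (fun t => by simp only [w, hper.iteratedDeriv 2 t, hper t]) hc
    (continuous_iff_continuousAt.2 fun t => (hw t).1.continuousAt)
  have hmin₂ : IsLocalMin w t₂ := .of_forall ht₂
  have hmax₁ : IsLocalMax v t₁ := .of_forall hmax
  have hw₂ : 0 ≤ lam * w t₂ + g (v t₂) :=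
    hmin₂.nonneg_of_hasDerivAt_of_hasDerivAt (fun t => (hw t).1) (hw t₂).2
  have hv₁ : iteratedDeriv 2 v t₁ ≤ 0 :=
    hmax₁.nonpos_of_hasDerivAt_of_hasDerivAt
      (fun t => by simpa using hv.hasDerivAt_iteratedDeriv_s13 (k := 0) (by norm_num) t)
      (hv.hasDerivAt_iteratedDeriv_s13 (k := 1) (by norm_num) t₁)
  calc lam * r ^ 2 * v t₁ ≤ -(lam * w t₁) := by
        simp only [w]; linarith [mul_nonneg hlam (neg_nonneg.2 hv₁)]
    _ ≤ -(lam * w t₂) := neg_le_neg (mul_le_mul_of_nonneg_left (ht₂ t₁) hlam)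
    _ ≤ g (v t₂) := by linarith
    _ ≤ g (v t₁) := hg ⟨t₂, rfl⟩ ⟨t₁, rfl⟩ (hmax t₂)

theorem lt_mul_cosh (hsol : IsSol (lam + r ^ 2) (lam * r ^ 2) g v) (hv : ContDiff ℝ 4 v)
    {L δ : ℝ} (hper : Periodic v L) (hL : 0 < L) (hlam : 0 < lam) (hvpos : ∀ t, 0 < v t)
    (hgpos : ∀ s > 0, 0 < g s) (hgmono : MonotoneOn g (Ioi 0))
    (hδ : ∀ s ∈ Ioc 0 δ, g s < lam * r ^ 2 * s) {t₀ : ℝ} (hmin : ∀ t, v t₀ ≤ v t) :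
    δ < v t₀ * cosh (r * L) := by
  obtain ⟨t₁, ht₁⟩ := hper.exists_forall_ge hL.ne' hv.continuous
  have hδM : δ < v t₁ := by
    by_contra! h
    exact (hsol.mul_le_of_forall_le hv hper hL.ne' hlam.le
      (hgmono.mono (range_subset_iff.2 hvpos)) ht₁).not_gt (hδ _ ⟨hvpos t₁, h⟩)
  obtain ⟨t, ht, hvt⟩ := hper.exists_mem_Ico hL t₁ t₀
  have hderiv (t : ℝ) : HasDerivAt v (iteratedDeriv 1 v t) t := by
    simpa using hv.hasDerivAt_iteratedDeriv_s13 (k := 0) (by norm_num) t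
  have hmin₀ : IsLocalMin v t₀ := .of_forall hmin
  have hcmp := le_mul_cosh_of_hasDerivAt hderiv
    (fun t => hv.hasDerivAt_iteratedDeriv_s13 (k := 1) (by norm_num) t)
    (fun t => (hsol.iteratedDeriv_two_lt hv hper hL.ne' hlam (fun t => hgpos _ (hvpos t)) t).le)
    (hmin₀.hasDerivAt_eq_zero (hderiv t₀)) t
  have hcosh : cosh (r * (t - t₀)) ≤ cosh (r * L) := by
    rw [cosh_le_cosh, abs_mul, abs_mul, abs_of_nonneg (sub_nonneg.2 ht.1), abs_of_pos hL]
    exact mul_le_mul_of_nonneg_left (by linarith [ht.2]) (abs_nonneg r)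
  calc δ < v t₁ := hδM
    _ = v t := hvt
    _ ≤ v t₀ * cosh (r * (t - t₀)) := hcmp
    _ ≤ v t₀ * cosh (r * L) := mul_le_mul_of_nonneg_left hcosh (hvpos t₀).le

end IsSol

namespace CondG

variable {n : ℕ} {g : ℝ → ℝ}

theorem strictMonoOn (hg : CondG n g) : StrictMonoOn g (Ioi 0) :=
  strictMonoOn_of_deriv_pos (convex_Ioi 0) hg.1.continuousOn fun t ht => by
    rw [interior_Ioi] at ht
    exact (div_pos (hg.2.1 t ht) ht).trans (hg.2.2.2.1 t ht).1

theorem exists_lt_mul (hg : CondG n g) :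
    ∃ δ > 0, ∀ s ∈ Ioc 0 δ, g s < (n : ℝ) ^ 2 * ((n : ℝ) - 4) ^ 2 / 16 * s := by
  obtain ⟨-, -, -, hderiv, ⟨β, -, hβ, hlim⟩, -⟩ := hg
  obtain ⟨δ, hδ, hsub⟩ :=
    mem_nhdsGT_iff_exists_Ioc_subset.1 (hlim.eventually (eventually_lt_nhds hβ))
  refine ⟨δ, hδ, fun s hs => ?_⟩
  rw [← div_lt_iff₀ hs.1]
  exact (hderiv s hs.1).1.trans (hsub hs)

end CondG

theorem tendsto_atTop_of_lt_mul_cosh {ι : Type*} {l : Filter ι} {a L : ι → ℝ} {r δ : ℝ}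
    (hδ : 0 < δ) (hL : ∀ i, 0 ≤ L i) (ha : Tendsto a l (𝓝 0))
    (h : ∀ i, δ < a i * cosh (r * L i)) : Tendsto L l atTop := by
  refine tendsto_atTop.2 fun C => ?_
  filter_upwards [ha.eventually (eventually_lt_nhds (div_pos hδ (cosh_pos (r * C))))] with i hi
  have hcosh : cosh (r * C) < cosh (r * L i) := by
    have := (h i).trans (mul_lt_mul_of_pos_right hi (cosh_pos (r * L i)))
    rw [div_mul_eq_mul_div, lt_div_iff₀ (cosh_pos _)] at this
    exact lt_of_mul_lt_mul_left this hδ.le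
  rw [cosh_lt_cosh, abs_mul, abs_mul, abs_of_nonneg (hL i)] at hcosh
  exact (le_abs_self C).trans (lt_of_mul_lt_mul_left hcosh (abs_nonneg r)).le

theorem stmt_13 (n : ℕ) (hn : 5 ≤ n) (g : ℝ → ℝ) (hg : CondG n g)
    (A B : ℝ) (hA : A = ((n : ℝ) * ((n : ℝ) - 4) + 8) / 2)
    (hB : B = (n : ℝ) ^ 2 * ((n : ℝ) - 4) ^ 2 / 16)
    (v : ℕ → ℝ → ℝ) (L : ℕ → ℝ) (a : ℕ → ℝ)
    (hv4 : ∀ m, ContDiff ℝ 4 (v m)) (hvpos : ∀ m t, 0 < v m t)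
    (hvsol : ∀ m, IsSol A B g (v m))
    (hL : ∀ m, 0 < L m) (hper : ∀ m t, v m (t + L m) = v m t)
    (hmin : ∀ m t, a m ≤ v m t) (hatt : ∀ m, ∃ t, v m t = a m)
    (ha : Filter.Tendsto a Filter.atTop (nhds 0)) :
    Filter.Tendsto L Filter.atTop Filter.atTop := by
  have hAB : A = ((n : ℝ) / 2) ^ 2 + (((n : ℝ) - 4) / 2) ^ 2 ∧
      B = ((n : ℝ) / 2) ^ 2 * (((n : ℝ) - 4) / 2) ^ 2 := by
    constructor <;> [rw [hA]; rw [hB]] <;> ring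
  have hlam : 0 < ((n : ℝ) / 2) ^ 2 := by
    have : (0 : ℝ) < n := by exact_mod_cast (by omega : 0 < n)
    positivity
  obtain ⟨δ, hδ, hsmall⟩ := hg.exists_lt_mul
  refine tendsto_atTop_of_lt_mul_cosh (r := ((n : ℝ) - 4) / 2) hδ (fun m => (hL m).le) ha
    fun m => ?_
  obtain ⟨t₀, ht₀⟩ := hatt m
  rw [← ht₀]
  refine (hAB.1 ▸ hAB.2 ▸ hvsol m).lt_mul_cosh (hv4 m) (hper m) (hL m) hlam (hvpos m) hg.2.1
    hg.strictMonoOn.monotoneOn (fun s hs => ?_) (ht₀ ▸ hmin m)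
  convert hsmall s hs using 2
  ring
end
end

section
/- Let λ, μ > 0, T ∈ ℝ, and let w : ℝ → ℝ be a C⁴ function satisfying w''''(t) − (λ + μ)·w''(t) + λ·μ·w(t) ≥ 0 for all t ∈ (T, ∞), together with the boundary conditions w(T) = 0, w''(T) = 0, w(t) → 0 as t → ∞, and w''(t) → 0 as t → ∞. Then w(t) ≥ 0 for all t ∈ (T, ∞). -/
/-!
Factor the operator as `(D² - λ)(D² - μ)`. The function `u = w'' - μ w` satisfies `u'' ≥ λ u`,
vanishes at `T` and at infinity, so the maximum principle for `D² - λ` gives `u ≤ 0`, i.e.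
`(-w)'' ≥ μ (-w)`. The same maximum principle for `D² - μ` applied to `-w` gives `w ≥ 0`.
The maximum principle itself: a positive maximum of `u` on `[T, ∞)` would be attained at an
interior point near which `u'' ≥ c u > 0`, where `u` is strictly convex and so has no local maximum.
-/

open Real Filter Set

open Topology Metric

theorem StrictConvexOn.not_isLocalMax {D : Set ℝ} {f : ℝ → ℝ} {a : ℝ}
    (hf : StrictConvexOn ℝ D f) (ha : a ∈ interior D) : ¬IsLocalMax f a := by
  intro hmax
  obtain ⟨ε, hε, hball⟩ := Metric.eventually_nhds_iff.1
    (Filter.Eventually.and (mem_interior_iff_mem_nhds.1 ha) hmax)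
  have hleft := @hball (a - ε / 2) (by rw [Real.dist_eq, abs_lt]; constructor <;> linarith)
  have hright := @hball (a + ε / 2) (by rw [Real.dist_eq, abs_lt]; constructor <;> linarith)
  have hmid := hf.2 hleft.1 hright.1 (by linarith) (by norm_num : (0 : ℝ) < 1 / 2)
    (by norm_num : (0 : ℝ) < 1 / 2) (by norm_num)
  have hcentre : (1 / 2 : ℝ) • (a - ε / 2) + (1 / 2 : ℝ) • (a + ε / 2) = a := by
    simp only [smul_eq_mul]; ring
  rw [hcentre, smul_eq_mul, smul_eq_mul] at hmid
  linarith [hleft.2, hright.2]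

theorem exists_isMaxOn_Ici_of_tendsto_zero {u : ℝ → ℝ} {T t : ℝ} (hu : ContinuousOn u (Ici T))
    (hlim : Tendsto u atTop (𝓝 0)) (ht : t ∈ Ici T) (hpos : 0 < u t) :
    ∃ a ∈ Ici T, IsMaxOn u (Ici T) a := by
  refine hu.exists_isMaxOn' isClosed_Ici ht ?_
  rw [cocompact_eq_atBot_atTop, inf_sup_right, eventually_sup]
  constructor
  · filter_upwards [(eventually_lt_atBot T).filter_mono inf_le_left,
      mem_inf_of_right (mem_principal_self _)] with x hxT hx
    exact absurd (mem_Ici.1 hx) (not_le.2 hxT)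
  · exact ((hlim.eventually (eventually_lt_nhds hpos)).mono fun _ h => h.le).filter_mono
      inf_le_left

theorem nonpos_of_mul_le_iteratedDeriv_two {c T : ℝ} {u : ℝ → ℝ} (hc : 0 < c)
    (hu : ContinuousOn u (Ici T)) (h : ∀ t ∈ Ioi T, c * u t ≤ iteratedDeriv 2 u t)
    (huT : u T ≤ 0) (hlim : Tendsto u atTop (𝓝 0)) : ∀ t ∈ Ioi T, u t ≤ 0 := by
  intro t ht
  by_contra! hpos
  obtain ⟨a, haT, hmax⟩ := exists_isMaxOn_Ici_of_tendsto_zero hu hlim (mem_Ici_of_Ioi ht) hpos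
  have hua : 0 < u a := hpos.trans_le (hmax (mem_Ici_of_Ioi ht))
  have ha : T < a := haT.lt_of_ne (by rintro rfl; linarith)
  obtain ⟨ε, hε, hball⟩ := Metric.eventually_nhds_iff_ball.1
    (Filter.Eventually.and (Ioi_mem_nhds ha)
      ((hu.continuousAt (Ici_mem_nhds ha)).eventually (lt_mem_nhds hua)))
  have hconv : StrictConvexOn ℝ (ball a ε) u := by
    refine strictConvexOn_of_deriv2_pos (convex_ball a ε)
      (hu.mono fun x hx => mem_Ici_of_Ioi (hball x hx).1) fun x hx => ?_
    rw [isOpen_ball.interior_eq] at hx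
    rw [← iteratedDeriv_eq_iterate]
    exact (mul_pos hc (hball x hx).2).trans_le (h x (hball x hx).1)
  exact hconv.not_isLocalMax (by rw [isOpen_ball.interior_eq]; exact mem_ball_self hε)
    (hmax.isLocalMax (Ici_mem_nhds ha))

theorem iteratedDeriv_two_iteratedDeriv_two_sub_mul {w : ℝ → ℝ} (hw : ContDiff ℝ 4 w) (c t : ℝ) :
    iteratedDeriv 2 (fun s => iteratedDeriv 2 w s - c * w s) t =
      iteratedDeriv 4 w t - c * iteratedDeriv 2 w t := by
  have hw2 : ContDiff ℝ 2 (iteratedDeriv 2 w) := by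
    rw [iteratedDeriv_eq_iterate]; exact hw.iterate_deriv' 2 2
  have hcw : ContDiffAt ℝ 2 (fun s => c * w s) t :=
    contDiffAt_const.mul (hw.of_le (by norm_num)).contDiffAt
  rw [iteratedDeriv_fun_sub hw2.contDiffAt hcw,
    iteratedDeriv_const_mul_field, iteratedDeriv_eq_iterate, iteratedDeriv_eq_iterate,
    iteratedDeriv_eq_iterate, ← Function.iterate_add_apply]

theorem stmt_14 (lam mu T : ℝ) (hlam : 0 < lam) (hmu : 0 < mu)
    (w : ℝ → ℝ) (hw4 : ContDiff ℝ 4 w)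
    (hineq : ∀ t ∈ Set.Ioi T,
      0 ≤ iteratedDeriv 4 w t - (lam + mu) * iteratedDeriv 2 w t + lam * mu * w t)
    (hwT : w T = 0) (hw''T : iteratedDeriv 2 w T = 0)
    (hlimw : Filter.Tendsto w Filter.atTop (nhds 0))
    (hlimw'' : Filter.Tendsto (iteratedDeriv 2 w) Filter.atTop (nhds 0)) :
    ∀ t ∈ Set.Ioi T, 0 ≤ w t := by
  have hw : Continuous w := hw4.continuous
  have hw'' : Continuous (iteratedDeriv 2 w) := hw4.continuous_iteratedDeriv 2 (by norm_num)
  have hu : ∀ t ∈ Ioi T, iteratedDeriv 2 w t - mu * w t ≤ 0 := by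
    refine nonpos_of_mul_le_iteratedDeriv_two hlam (by fun_prop) (fun t ht => ?_)
      (by simp [hwT, hw''T]) (by simpa using hlimw''.sub (hlimw.const_mul mu))
    rw [iteratedDeriv_two_iteratedDeriv_two_sub_mul hw4]
    linarith [hineq t ht]
  have hv : ∀ t ∈ Ioi T, -w t ≤ 0 := by
    refine nonpos_of_mul_le_iteratedDeriv_two hmu (by fun_prop) (fun t ht => ?_)
      (by simp [hwT]) (by simpa using hlimw.neg)
    rw [iteratedDeriv_fun_neg]
    linarith [hu t ht]
  exact fun t ht => neg_nonpos.1 (hv t ht)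
end
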